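/- arXiv:2101.05676 — 2 statements merged into one kernel-verified Lean document; each statement's English description precedes it below -/
import Mathlib

section
/- Every closed integral frieze pattern of order n is n-periodic, i.e., its entries satisfy a_{i,j} = a_{i+n, j+n} for all valid indices, and moreover the frieze is invariant under the glide reflection a_{i,j} = a_{j, i+n}. -/
/-- A closed integral frieze pattern of order `n`, encoded as a function on pairs of
integer indices, supported on the band `i ≤ j ≤ i + n`, with bounding rows of 0s and 1s,
positive integer entries in the interior, and the unimodular diamond rule. -/
def IsClosedFrieze (n : ℕ) (a : ℤ → ℤ → ℤ) : Prop :=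
  (∀ i : ℤ, a i i = 0) ∧
  (∀ i : ℤ, a i (i + 1) = 1) ∧
  (∀ i : ℤ, a i (i + n - 1) = 1) ∧
  (∀ i : ℤ, a i (i + n) = 0) ∧
  (∀ i j : ℤ, i + 2 ≤ j → j ≤ i + n - 2 → 0 < a i j) ∧
  (∀ i j : ℤ, i + 1 ≤ j → j ≤ i + n - 1 →
    a i j * a (i + 1) (j + 1) - a i (j + 1) * a (i + 1) j = 1) ∧
  (∀ i j : ℤ, j < i → a i j = 0) ∧
  (∀ i j : ℤ, i + n < j → a i j = 0)


/-!
Since all entries strictly inside the band are positive, the diamond rule can be cancelled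
to linear three-term recurrences `a i j + a i (j + 2) = a j (j + 2) * a i (j + 1)` along rows
and `a j k + a (j + 2) k = a j (j + 2) * a (j + 1) k` along columns
(the row version applied to the frieze `(i, j) ↦ a (-j) (-i)`), with the same coefficients.
Hence `a i j` and `a j (i + n)`, as functions of `j`, satisfy the same recurrence; they agree
for `j = i` (both `0`) and `j = i + 1` (both `1`), so they agree on the whole band.
Periodicity follows by applying the glide reflection twice.
-/

theorem add_mul_eq_mul_add_of_det_eq_one {R : Type*} [CommRing R] {x₀ x₁ x₂ y₀ y₁ y₂ : R}
    (h₀ : x₀ * y₁ - x₁ * y₀ = 1) (h₁ : x₁ * y₂ - x₂ * y₁ = 1) :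
    (x₀ + x₂) * y₁ = x₁ * (y₀ + y₂) := by
  linear_combination h₀ - h₁

namespace IsClosedFrieze

variable {n : ℕ} {a : ℤ → ℤ → ℤ}

theorem pos (h : IsClosedFrieze n a) {i j : ℤ} (hij : i + 1 ≤ j) (hji : j ≤ i + n - 1) :
    0 < a i j := by
  obtain ⟨-, hfirst, hlast, -, hinterior, -⟩ := h
  rcases hij.eq_or_lt with rfl | hij
  · simp [hfirst]
  rcases hji.eq_or_lt with rfl | hji
  · simp [hlast]
  exact hinterior i j (by omega) (by omega)

theorem dual (h : IsClosedFrieze n a) : IsClosedFrieze n (fun i j => a (-j) (-i)) := by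
  obtain ⟨hzero, hfirst, hlast, hend, hinterior, hdiamond, hlow, hhigh⟩ := h
  refine ⟨fun i => hzero (-i), fun i => ?_, fun i => ?_, fun i => ?_,
    fun i j hij hji => hinterior _ _ (by omega) (by omega), fun i j hij hji => ?_,
    fun i j hij => hlow _ _ (by omega), fun i j hij => hhigh _ _ (by omega)⟩
  · simpa [neg_add] using hfirst (-(i + 1))
  · simpa [neg_add, add_comm, add_left_comm, add_assoc, sub_eq_add_neg] using hlast (-(i + n - 1))
  · simpa [neg_add, add_comm, add_left_comm, add_assoc] using hend (-(i + n))
  · have := hdiamond (-(j + 1)) (-(i + 1)) (by omega) (by omega)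
    simp only [neg_add, neg_add_cancel_right] at this ⊢
    linear_combination this

theorem row_recurrence (h : IsClosedFrieze n a) {i j : ℤ} (hij : i ≤ j) (hjn : j + 2 ≤ i + n) :
    a i j + a i (j + 2) = a j (j + 2) * a i (j + 1) := by
  obtain ⟨hzero, hfirst, -, -, -, hdiamond, -⟩ := id h
  obtain ⟨d, rfl⟩ := Int.le.dest hij
  clear hij
  induction d generalizing i with
  | zero => simp [hzero, hfirst]
  | succ d ih =>
    have hd : i + ↑(d + 1) = i + 1 + d := by push_cast; ring
    rw [hd] at hjn ⊢
    have hdiamond₀ := hdiamond i (i + 1 + d) (by omega) (by omega)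
    have hdiamond₁ := hdiamond i (i + 1 + d + 1) (by omega) (by omega)
    rw [add_assoc _ 1 1, one_add_one_eq_two] at hdiamond₁
    have hnext := ih (i := i + 1) (by omega)
    have hpos := h.pos (i := i + 1) (j := i + 1 + d + 1) (by omega) (by omega)
    refine mul_right_cancel₀ hpos.ne' ?_
    rw [add_mul_eq_mul_add_of_det_eq_one hdiamond₀ hdiamond₁, hnext]
    ring

theorem col_recurrence (h : IsClosedFrieze n a) {j k : ℤ} (hjk : j + 2 ≤ k) (hkn : k ≤ j + n) :
    a j k + a (j + 2) k = a j (j + 2) * a (j + 1) k := by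
  have := h.dual.row_recurrence (i := -k) (j := -(j + 2)) (by omega) (by omega)
  simp only [neg_neg, neg_add, neg_add_cancel_right] at this
  rwa [show j + 2 + -1 = j + 1 by ring, add_comm] at this

theorem glide_of_mem_band (h : IsClosedFrieze n a) (i : ℤ) (d : ℕ) (hd : d ≤ n) :
    a i (i + d) = a (i + d) (i + n) := by
  obtain ⟨hzero, hfirst, hlast, hend, -⟩ := id h
  induction d using Nat.twoStepInduction with
  | zero => simp [hzero, hend]
  | one =>
    have hlast := hlast (i + 1)
    rw [show i + 1 + (n : ℤ) - 1 = i + n by ring] at hlast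
    simp [hfirst, hlast]
  | more d ih₀ ih₁ =>
    have hrow := h.row_recurrence (i := i) (j := i + d) (by omega) (by omega)
    have hcol := h.col_recurrence (j := i + d) (k := i + n) (by omega) (by omega)
    have hd₁ : i + ↑(d + 1) = i + d + 1 := by push_cast; ring
    have hd₂ : i + ↑(d + 2) = i + d + 2 := by push_cast; ring
    rw [hd₁] at ih₁
    rw [ih₀ (by omega), ih₁ (by omega)] at hrow
    rw [hd₂]
    linarith

theorem glide (h : IsClosedFrieze n a) (i j : ℤ) : a i j = a j (i + n) := by
  obtain ⟨-, -, -, -, -, -, hlow, hhigh⟩ := id h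
  rcases lt_or_ge j i with hji | hij
  · rw [hlow i j hji, hhigh j (i + n) (by omega)]
  rcases lt_or_ge (i + n) j with hnj | hjn
  · rw [hhigh i j hnj, hlow j (i + n) (by omega)]
  obtain ⟨d, rfl⟩ := Int.le.dest hij
  exact h.glide_of_mem_band i d (by omega)

end IsClosedFrieze

theorem closed_frieze_periodic_glide_general (n : ℕ) (a : ℤ → ℤ → ℤ)
    (h : IsClosedFrieze n a) :
    (∀ i j : ℤ, a (i + n) (j + n) = a i j) ∧ (∀ i j : ℤ, a i j = a j (i + n)) :=
  ⟨fun i j => by rw [h.glide i j, h.glide j (i + n)], h.glide⟩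

/-- Every closed integral frieze pattern of order `n` is `n`-periodic and invariant under
the glide reflection `a_{i,j} = a_{j, i+n}`. -/
theorem closed_frieze_periodic_glide (n : ℕ) (hn : 3 ≤ n) (a : ℤ → ℤ → ℤ)
    (h : IsClosedFrieze n a) :
    (∀ i j : ℤ, a (i + n) (j + n) = a i j) ∧ (∀ i j : ℤ, a i j = a j (i + n)) :=
  closed_frieze_periodic_glide_general n a h
end

section
/- If (a_1, ..., a_n) is the quiddity sequence of an infinite n-periodic integral frieze, then for any positive integer b, the sequence (a_1 + b, a_2, ..., a_n) is also the quiddity sequence of an infinite n-periodic integral frieze. -/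
/-- An infinite `n`-periodic integral frieze pattern: a row of 0s, a row of 1s, then
infinitely many rows of positive integers, satisfying the diamond rule and `n`-periodicity. -/
def IsInfiniteFrieze (n : ℕ) (a : ℤ → ℤ → ℤ) : Prop :=
  (∀ i : ℤ, a i i = 0) ∧
  (∀ i : ℤ, a i (i + 1) = 1) ∧
  (∀ i j : ℤ, i + 2 ≤ j → 0 < a i j) ∧
  (∀ i j : ℤ, i + 1 ≤ j →
    a i j * a (i + 1) (j + 1) - a i (j + 1) * a (i + 1) j = 1) ∧
  (∀ i j : ℤ, a (i + n) (j + n) = a i j)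

/-- `q : ℤ → ℤ` is the quiddity sequence of an infinite `n`-periodic integral frieze. -/
def IsInfQuiddity (n : ℕ) (q : ℤ → ℤ) : Prop :=
  (∀ i : ℤ, q (i + n) = q i) ∧
  ∃ a : ℤ → ℤ → ℤ, IsInfiniteFrieze n a ∧ ∀ i : ℤ, a i (i + 2) = q i

/-!
An `n`-periodic `q` is a quiddity sequence exactly when every continuant
`K(q i, …, q (i + d - 1))` with `d ≥ 1` is positive: the rows of a frieze obey the continuant
recurrence, and conversely the continuants fill a frieze, the diamond rule being the
Euler–Cassini identity for continuants. Raising entries of `q` only raises its continuants, so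
positivity, and with it the frieze, survives adding `b > 0` to every `q i` with `i ≡ 1 [ZMOD n]`.
-/

def continuant {R : Type*} [CommRing R] (s : ℕ → R) : ℕ → R
  | 0 => 0
  | 1 => 1
  | d + 2 => s d * continuant s (d + 1) - continuant s d

section Continuant

variable {R : Type*}

section CommRing

variable [CommRing R] (s : ℕ → R)

@[simp] theorem continuant_zero : continuant s 0 = 0 := rfl

@[simp] theorem continuant_one : continuant s 1 = 1 := rfl

theorem continuant_add_two (d : ℕ) :
    continuant s (d + 2) = s d * continuant s (d + 1) - continuant s d := rfl

theorem continuant_diamond (d : ℕ) :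
    continuant s (d + 1) * continuant (fun k => s (k + 1)) (d + 1) -
      continuant s (d + 2) * continuant (fun k => s (k + 1)) d = 1 := by
  induction d with
  | zero => simp [continuant_add_two]
  | succ d ih =>
    rw [continuant_add_two s (d + 1), continuant_add_two (fun k => s (k + 1)) d]
    linear_combination ih

end CommRing

variable [CommRing R] [LinearOrder R] [IsStrictOrderedRing R] {s t : ℕ → R}

/-- The cross term `t (d + 1) s d - s (d + 1) t d` grows by `(t d - s d) t (d + 1) s (d + 1)`
at each step, so it stays nonnegative while the continuants of `s` are positive. -/
theorem continuant_le_and_cross_le_of_le (hst : s ≤ t) (hpos : ∀ d, 0 < continuant s (d + 1))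
    (d : ℕ) :
    continuant s (d + 1) ≤ continuant t (d + 1) ∧
      continuant s (d + 1) * continuant t d ≤ continuant t (d + 1) * continuant s d := by
  induction d with
  | zero => simp
  | succ d ih =>
    obtain ⟨hle, hcross⟩ := ih
    have ht : 0 < continuant t (d + 1) := (hpos d).trans_le hle
    have hcross' : continuant s (d + 2) * continuant t (d + 1) ≤
        continuant t (d + 2) * continuant s (d + 1) := by
      rw [continuant_add_two, continuant_add_two]
      nlinarith [mul_nonneg (sub_nonneg.2 (hst d)) (mul_nonneg ht.le (hpos d).le)]
    refine ⟨le_of_mul_le_mul_right ?_ (hpos d), hcross'⟩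
    calc continuant s (d + 2) * continuant s (d + 1)
        ≤ continuant s (d + 2) * continuant t (d + 1) :=
          mul_le_mul_of_nonneg_left hle (hpos (d + 1)).le
      _ ≤ continuant t (d + 2) * continuant s (d + 1) := hcross'

theorem continuant_pos_of_le (hst : s ≤ t) (hpos : ∀ d, 0 < continuant s (d + 1)) (d : ℕ) :
    0 < continuant t (d + 1) :=
  (hpos d).trans_le (continuant_le_and_cross_le_of_le hst hpos d).1

end Continuant

namespace IsInfiniteFrieze

variable {n : ℕ} {a : ℤ → ℤ → ℤ} {q : ℤ → ℤ}

theorem pos_of_lt (ha : IsInfiniteFrieze n a) {i j : ℤ} (hij : i < j) : 0 < a i j := by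
  obtain rfl | hij := (Int.add_one_le_iff.2 hij).eq_or_lt
  · rw [ha.2.1 i]
    exact one_pos
  · exact ha.2.2.1 i j (by omega)

/-- Proved downwards in `i`, eliminating `a (i - 1) (j + 1) * a i (j + 2)` between the diamonds
at `(i - 1, j)` and `(i - 1, j + 1)`. -/
theorem add_two_eq (ha : IsInfiniteFrieze n a) (haq : ∀ i, a i (i + 2) = q i) {i j : ℤ}
    (hij : i ≤ j) : a i (j + 2) = q j * a i (j + 1) - a i j := by
  induction i, hij using Int.leInductionDown with
  | base => rw [haq, ha.2.1, ha.1, mul_one, sub_zero]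
  | pred i hij ih =>
    have h₁ := ha.2.2.2.1 (i - 1) (j + 1) (by omega)
    have h₂ := ha.2.2.2.1 (i - 1) j (by omega)
    rw [sub_add_cancel, add_assoc, one_add_one_eq_two] at h₁
    rw [sub_add_cancel] at h₂
    have hpos : 0 < a i (j + 1) := ha.pos_of_lt (by omega)
    have key :
        (a (i - 1) (j + 2) - (q j * a (i - 1) (j + 1) - a (i - 1) j)) * a i (j + 1) = 0 := by
      linear_combination (-1) * h₁ + a (i - 1) (j + 1) * ih + h₂
    exact sub_eq_zero.1 ((mul_eq_zero.1 key).resolve_right hpos.ne')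

theorem eq_continuant (ha : IsInfiniteFrieze n a) (haq : ∀ i, a i (i + 2) = q i) (i : ℤ)
    (d : ℕ) : a i (i + d) = continuant (fun k => q (i + k)) d := by
  induction d using Nat.twoStepInduction with
  | zero => simpa using ha.1 i
  | one => simpa using ha.2.1 i
  | more d ih₀ ih₁ =>
    rw [continuant_add_two, ← ih₀, ← ih₁]
    push_cast
    simp only [← add_assoc]
    exact ha.add_two_eq haq (by omega)

end IsInfiniteFrieze

/-- Through `Int.toNat`, the entries with `j < i` are `continuant _ 0 = 0`. -/
def continuantFrieze (q : ℤ → ℤ) (i j : ℤ) : ℤ :=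
  continuant (fun k : ℕ => q (i + k)) (j - i).toNat

theorem isInfiniteFrieze_continuantFrieze {n : ℕ} {q : ℤ → ℤ} (hper : ∀ i, q (i + n) = q i)
    (hpos : ∀ i (d : ℕ), 0 < continuant (fun k : ℕ => q (i + k)) (d + 1)) :
    IsInfiniteFrieze n (continuantFrieze q) := by
  refine ⟨fun i => by simp [continuantFrieze], fun i => by simp [continuantFrieze], ?_, ?_, ?_⟩
  · intro i j hij
    obtain ⟨d, hd⟩ : ∃ d : ℕ, (j - i).toNat = d + 1 := ⟨(j - i).toNat - 1, by omega⟩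
    rw [continuantFrieze, hd]
    exact hpos i d
  · intro i j hij
    obtain ⟨d, hd⟩ : ∃ d : ℕ, (j - (i + 1)).toNat = d := ⟨_, rfl⟩
    have hshift : (fun k : ℕ => q (i + 1 + k)) = fun k : ℕ => q (i + (k + 1 : ℕ)) := by
      funext k
      push_cast
      ring_nf
    simp only [continuantFrieze, hshift, show (j - i).toNat = d + 1 by omega,
      show (j + 1 - i).toNat = d + 2 by omega, show (j + 1 - (i + 1)).toNat = d + 1 by omega, hd]
    exact continuant_diamond _ d
  · intro i j
    have hshift : (fun k : ℕ => q (i + n + k)) = fun k : ℕ => q (i + k) := by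
      funext k
      rw [add_right_comm, hper]
    simp only [continuantFrieze, hshift, add_sub_add_right_eq_sub]

theorem isInfQuiddity_iff {n : ℕ} {q : ℤ → ℤ} :
    IsInfQuiddity n q ↔ (∀ i, q (i + n) = q i) ∧
      ∀ i (d : ℕ), 0 < continuant (fun k : ℕ => q (i + k)) (d + 1) := by
  refine ⟨fun ⟨hper, a, ha, haq⟩ => ⟨hper, fun i d => ?_⟩, fun ⟨hper, hpos⟩ => ?_⟩
  · rw [← ha.eq_continuant haq]
    exact ha.pos_of_lt (by omega)
  · refine ⟨hper, continuantFrieze q, isInfiniteFrieze_continuantFrieze hper hpos, fun i => ?_⟩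
    simp [continuantFrieze, continuant_add_two]

theorem infinite_quiddity_add_general (n : ℕ) (q : ℤ → ℤ)
    (hq : IsInfQuiddity n q) (b : ℤ) (hb : 0 < b) :
    IsInfQuiddity n (fun i => if (i : ZMod n) = (1 : ZMod n) then q i + b else q i) := by
  obtain ⟨hper, hpos⟩ := isInfQuiddity_iff.1 hq
  refine isInfQuiddity_iff.2 ⟨fun i => ?_, fun i => continuant_pos_of_le (fun k => ?_) (hpos i)⟩
  · simp only [Int.cast_add, Int.cast_natCast, ZMod.natCast_self, add_zero, hper]
  · dsimp only
    split_ifs <;> omega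

/-- Increasing one entry of the quiddity sequence of an infinite `n`-periodic frieze by any
positive integer `b` again yields the quiddity sequence of an infinite `n`-periodic frieze. -/
theorem infinite_quiddity_add (n : ℕ) (hn : 1 ≤ n) (q : ℤ → ℤ)
    (hq : IsInfQuiddity n q) (b : ℤ) (hb : 0 < b) :
    IsInfQuiddity n (fun i => if (i : ZMod n) = (1 : ZMod n) then q i + b else q i) :=
  infinite_quiddity_add_general n q hq b hb
end
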